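/- Let G be a finite connected chordal graph, let x be a vertex of G, and let u, v be vertices with d_G(u,x) = d_G(v,x) = ℓ for some positive integer ℓ. If there is a vertex y with d_G(y,x) > ℓ such that u and v are both ancestors of y with respect to x, then u = v or u and v are adjacent in G. -/

import Mathlib

open SimpleGraph

/-- A simple graph is *chordal* if every cycle of length at least 4 has a chord, i.e.
two vertices of the cycle that are adjacent in the graph but not consecutive on the cycle. -/
def SimpleGraph.IsChordal {V : Type*} (G : SimpleGraph V) : Prop :=
  ∀ (v : V) (c : G.Walk v v), c.IsCycle → 4 ≤ c.length →
    ∃ x y, x ∈ c.support ∧ y ∈ c.support ∧ G.Adj x y ∧ ¬ c.toSubgraph.Adj x y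

/-- The exact distance-`p` graph of `G`: same vertex set, with an edge between distinct
vertices `u` and `v` iff their graph distance is exactly `p`. -/
def SimpleGraph.exactDistGraph {V : Type*} (G : SimpleGraph V) (p : ℕ) : SimpleGraph V where
  Adj u v := u ≠ v ∧ G.edist u v = p
  symm := ⟨fun u v h => ⟨h.1.symm, by rw [SimpleGraph.edist_comm]; exact h.2⟩⟩
  loopless := ⟨fun v h => h.1 rfl⟩

/-- `w` is an *ancestor* of `u` with respect to `x` if `w` lies on a strictly earlier
distance-level from `x` than `u` does, and there is a path from `u` to `w` whose length is
the difference of the two levels. -/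
def SimpleGraph.IsAncestor {V : Type*} (G : SimpleGraph V) (x w u : V) : Prop :=
  G.dist x w < G.dist x u ∧
    ∃ q : G.Walk u w, q.IsPath ∧ q.length = G.dist x u - G.dist x w

/-
The vertices `u` and `v` are joined by a walk through `y` whose inner vertices lie strictly
farther from `x` than level `ℓ`, and by a walk through `x` whose inner vertices lie strictly
closer.
A shortest walk using only the vertices of a given walk is a chordless path, and no vertex above
level `ℓ` is adjacent to one below it, so if `u ≠ v` are not adjacent, the two chordless paths
glue to a chordless cycle of length at least 4, which a chordal graph does not have.
-/

namespace SimpleGraph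

variable {V : Type*} {G : SimpleGraph V} {u v w x y : V}

namespace Walk

theorem isChordless_of_forall_length_le {p : G.Walk u v}
    (hp : ∀ q : G.Walk u v, q.support ⊆ p.support → p.length ≤ q.length) :
    p.IsChordless := by
  suffices h : ∀ i j, i < j → j ≤ p.length → G.Adj (p.getVert i) (p.getVert j) →
      s(p.getVert i, p.getVert j) ∈ p.edges by
    rw [isChordless_iff_forall_mem_edges]
    intro a b ha hb hab
    obtain ⟨i, rfl, hi⟩ := mem_support_iff_exists_getVert.mp ha
    obtain ⟨j, rfl, hj⟩ := mem_support_iff_exists_getVert.mp hb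
    rcases lt_trichotomy i j with hij | rfl | hij
    · exact h i j hij hj hab
    · exact absurd rfl hab.ne
    · rw [Sym2.eq_swap]; exact h j i hij hi hab.symm
  intro i j hij hj hadj
  have hshort := hp ((p.take i).append (cons hadj (p.drop j))) <| by
    intro z hz
    rw [mem_support_append_iff, support_cons, List.mem_cons] at hz
    rcases hz with hz | rfl | hz
    · exact (p.isSubwalk_take i).support_subset hz
    · exact (p.isSubwalk_take i).support_subset (p.take i).end_mem_support
    · exact (p.isSubwalk_drop j).support_subset hz
  simp only [length_append, length_cons, take_length, drop_length] at hshort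
  obtain rfl : j = i + 1 := by omega
  exact (mk_mem_edges_iff_exists p).mpr ⟨i, by omega, rfl⟩

theorem isPath_of_forall_length_le {p : G.Walk u v}
    (hp : ∀ q : G.Walk u v, q.support ⊆ p.support → p.length ≤ q.length) : p.IsPath := by
  classical
  rw [← p.bypass_eq_self_of_length_le_length_bypass
    (hp _ p.support_bypass_subset_support)]
  exact p.bypass_isPath

theorem exists_isPath_isChordless_support_subset (p : G.Walk u v) :
    ∃ q : G.Walk u v, q.IsPath ∧ q.IsChordless ∧ q.support ⊆ p.support := by
  classical
  have hex : ∃ n, ∃ q : G.Walk u v, q.support ⊆ p.support ∧ q.length = n :=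
    ⟨p.length, p, List.Subset.refl _, rfl⟩
  obtain ⟨q, hqp, hq⟩ := Nat.find_spec hex
  have hmin : ∀ r : G.Walk u v, r.support ⊆ q.support → q.length ≤ r.length :=
    fun r hr => hq ▸ Nat.find_min' hex ⟨r, List.Subset.trans hr hqp, rfl⟩
  exact ⟨q, isPath_of_forall_length_le hmin, isChordless_of_forall_length_le hmin, hqp⟩

theorem IsPath.start_notMem_support_tail {p : G.Walk u v} (hp : p.IsPath) :
    u ∉ p.support.tail :=
  (List.nodup_cons.mp (p.cons_tail_support ▸ hp.support_nodup)).1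

theorem IsChordless.reverse {p : G.Walk u v} (hp : p.IsChordless) : p.reverse.IsChordless := by
  rw [isChordless_iff_forall_mem_edges]
  intro a b ha hb hab
  rw [support_reverse, List.mem_reverse] at ha hb
  rw [edges_reverse, List.mem_reverse]
  exact hp.mem_edges ha hb hab

theorem IsChordless.append {p : G.Walk u v} {q : G.Walk v w} (hp : p.IsChordless)
    (hq : q.IsChordless)
    (h : ∀ a ∈ p.support, a ∉ q.support → ∀ b ∈ q.support, b ∉ p.support →
      ¬ G.Adj a b) :
    (p.append q).IsChordless := by
  rw [isChordless_iff_forall_mem_edges]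
  intro a b ha hb hab
  rw [mem_support_append_iff] at ha hb
  rw [edges_append, List.mem_append]
  by_cases hap : a ∈ p.support <;> by_cases hbp : b ∈ p.support
  · exact Or.inl (hp.mem_edges hap hbp hab)
  · have haq : a ∈ q.support := by_contra fun haq => h a hap haq b (hb.resolve_left hbp) hbp hab
    exact Or.inr (hq.mem_edges haq (hb.resolve_left hbp) hab)
  · have hbq : b ∈ q.support :=
      by_contra fun hbq => h b hbp hbq a (ha.resolve_left hap) hap hab.symm
    exact Or.inr (hq.mem_edges (ha.resolve_left hap) hbq hab)
  · exact Or.inr (hq.mem_edges (ha.resolve_left hap) (hb.resolve_left hbp) hab)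

theorem dist_getVert_add_eq (hconn : G.Connected) (q : G.Walk y w)
    (hq : q.length + G.dist x w = G.dist x y) {i : ℕ} (hi : i ≤ q.length) :
    G.dist x (q.getVert i) + i = G.dist x y := by
  have hup : G.dist x y ≤ G.dist x (q.getVert i) + i := by
    calc G.dist x y ≤ G.dist x (q.getVert i) + G.dist (q.getVert i) y := hconn.dist_triangle
      _ ≤ G.dist x (q.getVert i) + (q.take i).reverse.length := by gcongr; exact dist_le _
      _ = G.dist x (q.getVert i) + i := by simp [take_length, hi]
  have hdown : G.dist x (q.getVert i) ≤ G.dist x w + (q.length - i) := by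
    calc G.dist x (q.getVert i) ≤ G.dist x w + G.dist w (q.getVert i) := hconn.dist_triangle
      _ ≤ G.dist x w + (q.drop i).reverse.length := by gcongr; exact dist_le _
      _ = G.dist x w + (q.length - i) := by simp [drop_length]
  omega

theorem eq_end_or_lt_dist_of_mem_support (hconn : G.Connected) (q : G.Walk y w)
    (hq : q.length + G.dist x w = G.dist x y) {z : V} (hz : z ∈ q.support) :
    z = w ∨ G.dist x w < G.dist x z := by
  obtain ⟨i, rfl, hi⟩ := mem_support_iff_exists_getVert.mp hz
  rcases hi.eq_or_lt with rfl | hi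
  · exact Or.inl q.getVert_length
  · have := q.dist_getVert_add_eq hconn hq hi.le
    exact Or.inr (by omega)

theorem eq_start_or_dist_lt_of_mem_support (hconn : G.Connected) (q : G.Walk y w)
    (hq : q.length + G.dist x w = G.dist x y) {z : V} (hz : z ∈ q.support) :
    z = y ∨ G.dist x z < G.dist x y := by
  obtain ⟨i, rfl, hi⟩ := mem_support_iff_exists_getVert.mp hz
  rcases Nat.eq_zero_or_pos i with rfl | hi0
  · exact Or.inl q.getVert_zero
  · have := q.dist_getVert_add_eq hconn hq hi
    exact Or.inr (by omega)

end Walk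

theorem IsChordal.not_isChordless (hG : G.IsChordal) {c : G.Walk v v} (hc : c.IsCycle)
    (hlen : 4 ≤ c.length) : ¬ c.IsChordless := by
  intro hchordless
  obtain ⟨a, b, ha, hb, hab, hnot⟩ := hG v c hc hlen
  exact hnot (Walk.adj_toSubgraph_iff_mem_edges.mpr (hchordless.mem_edges ha hb hab))

theorem IsChordal.eq_or_adj_of_separated_walks (hG : G.IsChordal) {A B : Set V}
    (hAB : ∀ a ∈ A, ∀ b ∈ B, a ≠ b ∧ ¬ G.Adj a b) (p q : G.Walk u v)
    (hp : ∀ w ∈ p.support, w = u ∨ w = v ∨ w ∈ A)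
    (hq : ∀ w ∈ q.support, w = u ∨ w = v ∨ w ∈ B) :
    u = v ∨ G.Adj u v := by
  by_contra! ⟨hne, hnadj⟩
  have two_le : ∀ r : G.Walk u v, 2 ≤ r.length := by
    intro r
    by_contra! hr
    interval_cases h : r.length
    · exact hne (Walk.eq_of_length_eq_zero h)
    · exact hnadj (Walk.adj_of_length_eq_one h)
  obtain ⟨P, hPpath, hPch, hPp⟩ := p.exists_isPath_isChordless_support_subset
  obtain ⟨Q, hQpath, hQch, hQq⟩ := q.exists_isPath_isChordless_support_subset
  have hA : ∀ w ∈ P.support, w ≠ u → w ≠ v → w ∈ A := fun w hw hwu hwv =>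
    ((hp w (hPp hw)).resolve_left hwu).resolve_left hwv
  have hB : ∀ w ∈ Q.support, w ≠ u → w ≠ v → w ∈ B := fun w hw hwu hwv =>
    ((hq w (hQq hw)).resolve_left hwu).resolve_left hwv
  have hcycle : (P.append Q.reverse).IsCycle := by
    refine hPpath.isCycle_append hQpath.reverse (fun w hwP hwQ => ?_) (Or.inl (two_le P))
    have hwQ' : w ∈ Q.support := by simpa using List.mem_of_mem_tail hwQ
    by_cases hwu : w = u
    · exact hPpath.start_notMem_support_tail (hwu ▸ hwP)
    by_cases hwv : w = v
    · exact hQpath.reverse.start_notMem_support_tail (hwv ▸ hwQ)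
    exact (hAB w (hA w (List.mem_of_mem_tail hwP) hwu hwv) w (hB w hwQ' hwu hwv)).1 rfl
  refine hG.not_isChordless hcycle ?_ (hPch.append hQch.reverse fun a ha haQ b hb hbP => ?_)
  · rw [Walk.length_append, Walk.length_reverse]
    linarith [two_le P, two_le Q]
  · rw [Walk.support_reverse, List.mem_reverse] at haQ hb
    have hau : a ≠ u := fun h => haQ (h ▸ Q.start_mem_support)
    have hav : a ≠ v := fun h => haQ (h ▸ Q.end_mem_support)
    have hbu : b ≠ u := fun h => hbP (h ▸ P.start_mem_support)
    have hbv : b ≠ v := fun h => hbP (h ▸ P.end_mem_support)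
    exact (hAB a (hA a ha hau hav) b (hB b hb hbu hbv)).2

theorem not_adj_of_dist_lt_of_lt_dist {a b : V} {ℓ : ℕ} (ha : ℓ < G.dist x a)
    (hb : G.dist x b < ℓ) : ¬ G.Adj a b := fun hab => by
  rcases hab.diff_dist_adj (u := x) with h | h | h <;> omega

theorem IsAncestor.exists_walk_support_above (hconn : G.Connected) (h : G.IsAncestor x w y) :
    ∃ q : G.Walk y w, ∀ z ∈ q.support, z = w ∨ G.dist x w < G.dist x z := by
  obtain ⟨hlt, q, -, hq⟩ := h
  exact ⟨q, fun z hz => q.eq_end_or_lt_dist_of_mem_support hconn (by omega) hz⟩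

theorem Connected.exists_walk_support_below (hconn : G.Connected) (w x : V) :
    ∃ q : G.Walk w x, ∀ z ∈ q.support, z = w ∨ G.dist x z < G.dist x w := by
  obtain ⟨q, hq⟩ := hconn.exists_walk_length_eq_dist w x
  refine ⟨q, fun z hz => q.eq_start_or_dist_lt_of_mem_support hconn ?_ hz⟩
  rw [dist_self, hq, dist_comm, add_zero]

end SimpleGraph

theorem ancestors_eq_or_adj_general {V : Type*} (G : SimpleGraph V)
    (hch : G.IsChordal) (hconn : G.Connected) (x u v y : V) (ℓ : ℕ)
    (hu : G.dist u x = ℓ) (hv : G.dist v x = ℓ)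
    (hau : G.IsAncestor x u y) (hav : G.IsAncestor x v y) :
    u = v ∨ G.Adj u v := by
  have hu' : G.dist x u = ℓ := dist_comm.trans hu
  have hv' : G.dist x v = ℓ := dist_comm.trans hv
  obtain ⟨qu, hqu⟩ := hau.exists_walk_support_above hconn
  obtain ⟨qv, hqv⟩ := hav.exists_walk_support_above hconn
  obtain ⟨gu, hgu⟩ := hconn.exists_walk_support_below u x
  obtain ⟨gv, hgv⟩ := hconn.exists_walk_support_below v x
  rw [hu'] at hqu hgu
  rw [hv'] at hqv hgv
  refine hch.eq_or_adj_of_separated_walks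
    (A := {z | ℓ < G.dist x z}) (B := {z | G.dist x z < ℓ})
    (fun a ha b hb => ⟨fun hab => (hab ▸ ha : ℓ < G.dist x b).asymm hb,
      not_adj_of_dist_lt_of_lt_dist ha hb⟩)
    (qu.reverse.append qv) (gu.append gv.reverse) ?_ ?_
  all_goals
    intro z hz
    simp only [Walk.mem_support_append_iff, Walk.support_reverse, List.mem_reverse] at hz
  · exact hz.elim (fun hz => (hqu z hz).imp_right Or.inr) fun hz => Or.inr (hqv z hz)
  · exact hz.elim (fun hz => (hgu z hz).imp_right Or.inr) fun hz => Or.inr (hgv z hz)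

/-- In a finite connected chordal graph `G`, if `u` and `v` lie on level
`ℓ ≥ 1` with respect to `x` and are both ancestors of a vertex `y` lying on a level deeper
than `ℓ`, then `u = v` or `u` and `v` are adjacent. -/
theorem ancestors_eq_or_adj {V : Type*} [Fintype V] (G : SimpleGraph V)
    (hch : G.IsChordal) (hconn : G.Connected) (x u v y : V) (ℓ : ℕ) (hℓ : 1 ≤ ℓ)
    (hu : G.dist u x = ℓ) (hv : G.dist v x = ℓ) (hy : ℓ < G.dist y x)
    (hau : G.IsAncestor x u y) (hav : G.IsAncestor x v y) :
    u = v ∨ G.Adj u v :=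
  ancestors_eq_or_adj_general G hch hconn x u v y ℓ hu hv hau hav
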